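/- arXiv:2006.14733 — 2 statements merged into one kernel-verified Lean document; each statement's English description precedes it below -/
import Mathlib

section
/- Let G be a graph with k-burning number b_k(G) = t, and let j be the smallest positive integer such that some maximal independent set M_j of G^{2j} satisfies |M_j| ≤ k·j. Then j ≤ b_k(G), and all vertices of G can be burned within 3j ≤ 3·b_k(G) rounds of the k-burning process by first burning the vertices of M_j (k per round) and then propagating. -/
/-!
If `G` burns in `t` rounds, the at most `k t` sources lie within distance `t - 1` of every
vertex, so two points of an independent set of `G^{2t}` never share a nearest source and such a
set has at most `k t` elements. A maximal independent set of `G^{2b}`, `b = b_k(G)`, therefore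
has size at most `k b`, and minimality of `j` forces `j ≤ b`. Conversely, a maximal independent
set `M` of `G^{2j}` dominates `G^{2j}`; lighting it `k` vertices per round in the first `j`
rounds leaves `2j` further rounds of spreading, enough to reach every vertex.
-/

/-- The `r`-th power of a graph: distinct vertices are adjacent iff their
distance in `G` is (finite and) at most `r`. -/
def SimpleGraph.power {V : Type*} (G : SimpleGraph V) (r : ℕ) : SimpleGraph V where
  Adj u v := u ≠ v ∧ G.Reachable u v ∧ G.dist u v ≤ r
  symm := ⟨fun u v ⟨h1, h2, h3⟩ => ⟨h1.symm, h2.symm, by rwa [SimpleGraph.dist_comm]⟩⟩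
  loopless := ⟨fun v h => h.1 rfl⟩

/-- `D` is a dominating set of `H`. -/
def SimpleGraph.DomSet {V : Type*} (H : SimpleGraph V) (D : Finset V) : Prop :=
  ∀ v : V, v ∈ D ∨ ∃ u ∈ D, H.Adj u v

/-- `M` is an independent set of `H`. -/
def SimpleGraph.IndepFinset {V : Type*} (H : SimpleGraph V) (M : Finset V) : Prop :=
  ∀ u ∈ M, ∀ v ∈ M, ¬ H.Adj u v

/-- `M` is a maximal independent set of `H`. -/
def SimpleGraph.MaxIndepFinset {V : Type*} (H : SimpleGraph V) (M : Finset V) : Prop :=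
  H.IndepFinset M ∧ ∀ v, v ∉ M → ∃ u ∈ M, H.Adj u v

/-- `G` can be burned within `t` rounds of the `k`-burning process:
there are source sets `s 0, …, s (t-1)` (at most `k` sources per round,
the sources of round `i+1` being `s i`) such that every vertex is within
distance `t - 1 - i` of a source chosen at round `i + 1`. -/
def SimpleGraph.kBurnableIn {V : Type*} (G : SimpleGraph V) (k t : ℕ) : Prop :=
  ∃ s : Fin t → Finset V, (∀ i, (s i).card ≤ k) ∧
    ∀ v : V, ∃ i : Fin t, ∃ u ∈ s i, G.Reachable u v ∧ G.dist u v ≤ t - 1 - i.val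

/-- The `k`-burning number of `G`. -/
noncomputable def SimpleGraph.burningNumber {V : Type*} (G : SimpleGraph V) (k : ℕ) : ℕ :=
  sInf {t | G.kBurnableIn k t}

open Finset in
theorem Finset.exists_fin_cover_of_card_le_mul {α : Type*} {k j : ℕ} {S : Finset α}
    (hS : #S ≤ k * j) : ∃ s : Fin j → Finset α, (∀ i, #(s i) ≤ k) ∧ ∀ v ∈ S, ∃ i, v ∈ s i := by
  classical
  induction j generalizing S with
  | zero => exact ⟨Fin.elim0, Fin.rec0, by simp_all⟩
  | succ j ih =>
    obtain ⟨T, hTS, hT⟩ := S.exists_subset_card_eq (min_le_right k #S)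
    obtain ⟨s, hs, hcover⟩ := ih (S := S \ T) (by
      rw [card_sdiff_of_subset hTS, hT]
      rw [Nat.mul_succ] at hS
      omega)
    refine ⟨Fin.cons T s, Fin.cases (by simp [hT]) (by simpa using hs), fun v hv => ?_⟩
    by_cases hvT : v ∈ T
    · exact ⟨0, by simpa using hvT⟩
    · obtain ⟨i, hi⟩ := hcover v (mem_sdiff.mpr ⟨hv, hvT⟩)
      exact ⟨i.succ, by simpa using hi⟩

namespace SimpleGraph

variable {V : Type*} {G : SimpleGraph V} {k : ℕ}

theorem exists_maxIndepFinset [Finite V] (H : SimpleGraph V) : ∃ M, H.MaxIndepFinset M := by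
  classical
  obtain ⟨M, hM⟩ := (Set.toFinite {M : Finset V | H.IndepFinset M}).exists_maximal
    ⟨∅, by simp [IndepFinset]⟩
  refine ⟨M, hM.prop, fun v hv => ?_⟩
  by_contra! hfree
  have hins : H.IndepFinset (insert v M) := by
    simp only [IndepFinset, Finset.mem_insert, forall_eq_or_imp]
    exact ⟨⟨H.loopless.irrefl v, fun u hu huv => hfree u hu huv.symm⟩,
      fun u hu => ⟨hfree u hu, hM.prop u hu⟩⟩
  exact hv (Finset.insert_subset_iff.mp (hM.2 hins (Finset.subset_insert v M))).1

theorem IndepFinset.card_le_of_forall_exists_dist_le {r : ℕ} {M D : Finset V}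
    (hM : (G.power (2 * r)).IndepFinset M)
    (hD : ∀ v, ∃ u ∈ D, G.Reachable u v ∧ G.dist u v ≤ r) : M.card ≤ D.card := by
  choose f hfD hfreach hfdist using hD
  refine Finset.card_le_card_of_injOn f (fun m _ => hfD m) fun m₁ hm₁ m₂ hm₂ hf => ?_
  by_contra hne
  have hreach : G.Reachable m₁ m₂ := (hfreach m₁).symm.trans (hf ▸ hfreach m₂)
  refine hM m₁ hm₁ m₂ hm₂ ⟨hne, hreach, ?_⟩
  calc G.dist m₁ m₂ ≤ G.dist m₁ (f m₁) + G.dist (f m₁) m₂ :=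
        (hfreach m₁).symm.dist_triangle_left m₂
    _ = G.dist (f m₁) m₁ + G.dist (f m₂) m₂ := by rw [dist_comm, hf]
    _ ≤ 2 * r := by linarith [hfdist m₁, hfdist m₂]

theorem MaxIndepFinset.exists_dist_le {r : ℕ} {M : Finset V}
    (hM : (G.power r).MaxIndepFinset M) (v : V) :
    ∃ u ∈ M, G.Reachable u v ∧ G.dist u v ≤ r := by
  by_cases hv : v ∈ M
  · exact ⟨v, hv, .refl v, by simp⟩
  · obtain ⟨u, hu, -, hreach, hdist⟩ := hM.2 v hv
    exact ⟨u, hu, hreach, hdist⟩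

theorem kBurnableIn_add_of_forall_exists_dist_le {j r : ℕ} {D : Finset V}
    (hD : D.card ≤ k * j) (hcover : ∀ v, ∃ u ∈ D, G.Reachable u v ∧ G.dist u v ≤ r) :
    G.kBurnableIn k (j + r) := by
  obtain ⟨s, hs, hDs⟩ := Finset.exists_fin_cover_of_card_le_mul hD
  refine ⟨Fin.append s fun _ => ∅, Fin.addCases (by simpa using hs) (by simp), fun v => ?_⟩
  obtain ⟨u, hu, hreach, hdist⟩ := hcover v
  obtain ⟨i, hi⟩ := hDs u hu
  refine ⟨Fin.castAdd r i, u, by simpa using hi, hreach, ?_⟩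
  simp only [Fin.val_castAdd]
  omega

theorem kBurnableIn.exists_finset_forall_exists_dist_le {t : ℕ} (h : G.kBurnableIn k t) :
    ∃ D : Finset V, D.card ≤ k * t ∧ ∀ v, ∃ u ∈ D, G.Reachable u v ∧ G.dist u v ≤ t := by
  classical
  obtain ⟨s, hs, hcover⟩ := h
  refine ⟨Finset.univ.biUnion s, ?_, fun v => ?_⟩
  · calc (Finset.univ.biUnion s).card ≤ ∑ i, (s i).card := Finset.card_biUnion_le
      _ ≤ ∑ _i : Fin t, k := Finset.sum_le_sum fun i _ => hs i
      _ = k * t := by simp [mul_comm]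
  · obtain ⟨i, u, hu, hreach, hdist⟩ := hcover v
    exact ⟨u, Finset.mem_biUnion.mpr ⟨i, Finset.mem_univ i, hu⟩, hreach, by omega⟩

theorem kBurnableIn.card_le_of_indepFinset {t : ℕ} {M : Finset V} (h : G.kBurnableIn k t)
    (hM : (G.power (2 * t)).IndepFinset M) : M.card ≤ k * t := by
  obtain ⟨D, hD, hcover⟩ := h.exists_finset_forall_exists_dist_le
  exact (hM.card_le_of_forall_exists_dist_le hcover).trans hD

theorem kBurnableIn.pos [Nonempty V] {t : ℕ} (h : G.kBurnableIn k t) : 0 < t := by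
  obtain ⟨_, _, hcover⟩ := h
  obtain ⟨i, -⟩ := hcover (Classical.arbitrary V)
  exact i.pos

end SimpleGraph

theorem stmt8_general {V : Type*} [Fintype V] [Nonempty V] (G : SimpleGraph V)
    (k : ℕ) (j : ℕ)
    (M : Finset V) (hM : (G.power (2 * j)).MaxIndepFinset M) (hMcard : M.card ≤ k * j)
    (hmin : ∀ j', 0 < j' → j' < j → ∀ M' : Finset V,
      (G.power (2 * j')).MaxIndepFinset M' → k * j' < M'.card) :
    j ≤ G.burningNumber k ∧ G.kBurnableIn k (3 * j) ∧
      3 * j ≤ 3 * G.burningNumber k := by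
  have hburn : G.kBurnableIn k (3 * j) := by
    rw [show 3 * j = j + 2 * j by ring]
    exact SimpleGraph.kBurnableIn_add_of_forall_exists_dist_le hMcard hM.exists_dist_le
  have hb : G.kBurnableIn k (G.burningNumber k) :=
    Nat.sInf_mem (s := {t | G.kBurnableIn k t}) ⟨_, hburn⟩
  have hjb : j ≤ G.burningNumber k := by
    by_contra! hbj
    obtain ⟨M', hM'⟩ := (G.power (2 * G.burningNumber k)).exists_maxIndepFinset
    have hlarge := hmin _ hb.pos hbj M' hM'
    have hsmall := hb.card_le_of_indepFinset hM'.1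
    omega
  exact ⟨hjb, hburn, by omega⟩

/-- if `j` is the smallest positive integer admitting a maximal
independent set `M` of `G^{2j}` with `|M| ≤ k·j`, then `j ≤ b_k(G)` and `G` can
be `k`-burned within `3j ≤ 3 b_k(G)` rounds. -/
theorem stmt8 {V : Type*} [Fintype V] [DecidableEq V] [Nonempty V] (G : SimpleGraph V)
    (k : ℕ) (hk : 0 < k) (j : ℕ) (hj : 0 < j)
    (M : Finset V) (hM : (G.power (2 * j)).MaxIndepFinset M) (hMcard : M.card ≤ k * j)
    (hmin : ∀ j', 0 < j' → j' < j → ∀ M' : Finset V,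
      (G.power (2 * j')).MaxIndepFinset M' → k * j' < M'.card) :
    j ≤ G.burningNumber k ∧ G.kBurnableIn k (3 * j) ∧
      3 * j ≤ 3 * G.burningNumber k :=
  stmt8_general G k j M hM hMcard hmin
end

section
/- If G is a path on n vertices, then the k-burning number of G is at least ⌈√(n/k)⌉. -/
/-! A source chosen in round `i + 1` of a `t`-round burning ignites only the vertices
within distance `t - 1 - i` of it, and on a path these number at most `2 (t - 1 - i) + 1`.
With at most `k` sources per round, `n ≤ k (1 + 3 + ⋯ + (2t - 1)) = k t²`. -/

open Finset

namespace SimpleGraph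

variable {V : Type*}

theorem kBurnableIn_card [Fintype V] (G : SimpleGraph V) {k : ℕ} (hk : 0 < k) :
    G.kBurnableIn k (Fintype.card V) :=
  ⟨fun i => {(Fintype.equivFin V).symm i}, fun _ => (card_singleton _).trans_le hk,
    fun v => ⟨Fintype.equivFin V v, v, by simp, Reachable.refl v, by simp⟩⟩

theorem card_le_mul_sum_of_kBurnableIn [Fintype V] {G : SimpleGraph V} {k t : ℕ} (f : ℕ → ℕ)
    (hball : ∀ u r (B : Finset V), (∀ v ∈ B, G.Reachable u v ∧ G.dist u v ≤ r) →
      #B ≤ f r)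
    (h : G.kBurnableIn k t) : Fintype.card V ≤ k * ∑ r ∈ range t, f r := by
  classical
  obtain ⟨s, hcard, hcover⟩ := h
  set ball : V → ℕ → Finset V := fun u r => {v | G.Reachable u v ∧ G.dist u v ≤ r}
  have hsub : (univ : Finset V) ⊆
      univ.biUnion fun i : Fin t => (s i).biUnion fun u => ball u (t - 1 - i) := by
    intro v _
    obtain ⟨i, u, hu, hv⟩ := hcover v
    simp only [mem_biUnion, mem_univ, true_and]
    exact ⟨i, u, hu, by simpa [ball] using hv⟩
  have hball_card : ∀ u r, #(ball u r) ≤ f r := fun u r =>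
    hball u r _ fun v hv => by simpa [ball] using hv
  calc Fintype.card V = #(univ : Finset V) := rfl
    _ ≤ _ := card_le_card hsub
    _ ≤ ∑ i : Fin t, ∑ u ∈ s i, #(ball u (t - 1 - i)) :=
      card_biUnion_le.trans (sum_le_sum fun i _ => card_biUnion_le)
    _ ≤ ∑ i : Fin t, k * f (t - 1 - i) := sum_le_sum fun i _ =>
      (sum_le_card_nsmul _ _ _ fun u _ => hball_card u _).trans (Nat.mul_le_mul_right _ (hcard i))
    _ = k * ∑ r ∈ range t, f r := by
      rw [← mul_sum, Fin.sum_univ_eq_sum_range (fun i => f (t - 1 - i)), sum_range_reflect]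

theorem Walk.pathGraph_val_le_val_add_length {n : ℕ} {u v : Fin n} (w : (pathGraph n).Walk u v) :
    u.val ≤ v.val + w.length := by
  induction w with
  | nil => simp
  | cons h _ ih =>
    rw [pathGraph_adj] at h
    rw [Walk.length_cons]
    omega

theorem pathGraph_val_le_val_add_dist {n : ℕ} (u v : Fin n) :
    u.val ≤ v.val + (pathGraph n).dist u v := by
  obtain ⟨w, hw⟩ := (pathGraph_preconnected n u v).exists_walk_length_eq_dist
  exact hw ▸ w.pathGraph_val_le_val_add_length

theorem pathGraph_card_le_of_forall_dist_le {n : ℕ} (u : Fin n) (r : ℕ) (B : Finset (Fin n))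
    (hB : ∀ v ∈ B, (pathGraph n).dist u v ≤ r) : #B ≤ 2 * r + 1 := by
  have hmaps : ∀ v ∈ B, v.val ∈ Icc (u.val - r) (u.val + r) := by
    intro v hv
    have huv := pathGraph_val_le_val_add_dist u v
    have hvu := pathGraph_val_le_val_add_dist v u
    rw [dist_comm] at hvu
    have := hB v hv
    rw [mem_Icc]
    omega
  calc #B ≤ #(Icc (u.val - r) (u.val + r)) :=
        card_le_card_of_injOn Fin.val hmaps Fin.val_injective.injOn
    _ ≤ 2 * r + 1 := by rw [Nat.card_Icc]; omega

theorem sum_range_two_mul_add_one (t : ℕ) : ∑ r ∈ range t, (2 * r + 1) = t ^ 2 := by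
  induction t with
  | zero => simp
  | succ t ih => rw [sum_range_succ, ih]; ring

theorem pathGraph_le_mul_sq_of_kBurnableIn {n k t : ℕ} (h : (pathGraph n).kBurnableIn k t) :
    n ≤ k * t ^ 2 := by
  simpa [sum_range_two_mul_add_one] using
    card_le_mul_sum_of_kBurnableIn (fun r => 2 * r + 1)
      (fun u r B hB => pathGraph_card_le_of_forall_dist_le u r B fun v hv => (hB v hv).2) h

end SimpleGraph

theorem Nat.ceil_sqrt_div_le {n k t : ℕ} (h : n ≤ k * t ^ 2) :
    ⌈Real.sqrt ((n : ℝ) / k)⌉₊ ≤ t := by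
  rw [Nat.ceil_le, Real.sqrt_le_left (Nat.cast_nonneg t)]
  exact div_le_of_le_mul₀ k.cast_nonneg (by positivity) (by rw [mul_comm]; exact_mod_cast h)

/-- the `k`-burning number of the path on `n` vertices is at
least `⌈√(n/k)⌉`. -/
theorem stmt10 (n k : ℕ) (hk : 0 < k) :
    ⌈Real.sqrt ((n : ℝ) / (k : ℝ))⌉₊ ≤ (SimpleGraph.pathGraph n).burningNumber k := by
  refine le_csInf ⟨_, (SimpleGraph.pathGraph n).kBurnableIn_card hk⟩ fun t ht => ?_
  exact Nat.ceil_sqrt_div_le (SimpleGraph.pathGraph_le_mul_sq_of_kBurnableIn ht)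
end
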